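/- arXiv:2406.15882 — 3 statements merged into one kernel-verified Lean document; each statement's English description precedes it below -/
import Mathlib

section
/- Let Σ be a monoidal signature, let Z be a discrete e-hypergraph, and let f : Z → X and g : Z → Y be e-hypergraph homomorphisms such that: (i) any two vertices v_i, v_j of Z satisfy [f(v_i)) = [f(v_j)) and [g(v_i)) = [g(v_j)), where [x) denotes the set of parents of x; (ii) for every vertex v of Z, if [f(v)) ≠ ∅ then [g(v)) = ∅, and if [g(v)) ≠ ∅ then [f(v)) = ∅; (iii) any two vertices v_i, v_j of Z satisfy ⌣(f(v_i)) = ⌣(f(v_j)) and ⌣(g(v_i)) = ⌣(g(v_j)), where ⌣(x) denotes the consistency class of x. Then the pushout X +_{f,g} Y of the span Y ← Z → X exists in EHyp(Σ). -/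
open CategoryTheory

/-- A monoidal signature: a set of generators, each with an arity and a co-arity. -/
structure MSig : Type 1 where
  Gen : Type
  ar : Gen → ℕ
  coar : Gen → ℕ

variable (σ : MSig)

/-- An e-hypergraph over a monoidal signature `σ`: a finite hypergraph whose edges are
labelled by generators or by `⊥` (hierarchical edges, encoded by `none`), equipped with a
hierarchy (child) structure given by an immediate-parent function into hierarchical edges,
and a consistency relation partitioning the children of every hierarchical edge. -/
structure EHyp : Type 1 where
  V : Type
  E : Type
  [fintV : Fintype V]
  [fintE : Fintype E]
  src : E → List V
  tgt : E → List V
  lbl : E → Option σ.Gen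
  /-- the immediate parent (a hierarchical edge) of a vertex or edge, if any -/
  parent : V ⊕ E → Option E
  /-- the consistency relation -/
  cons : V ⊕ E → V ⊕ E → Prop
  lbl_ar : ∀ (e : E) (g : σ.Gen), lbl e = some g →
    (src e).length = σ.ar g ∧ (tgt e).length = σ.coar g
  /-- parents are hierarchical edges -/
  parent_hier : ∀ x e, parent x = some e → lbl e = none
  /-- the child relation is a strict partial order (no parent cycles) -/
  acyclic_parent : ∀ x : V ⊕ E,
    ¬ Relation.TransGen (fun a b : V ⊕ E => ∃ e, a = Sum.inr e ∧ parent b = some e) x x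
  /-- the child relation respects connectivity -/
  parent_conn : ∀ (e : E) (v : V), (v ∈ src e ∨ v ∈ tgt e) →
    parent (Sum.inl v) = parent (Sum.inr e)
  /-- maximal edges (edges which are nobody's parent) are labelled -/
  maximal_lbl : ∀ e : E, (∀ x, parent x ≠ some e) → lbl e ≠ none
  cons_symm : ∀ {x y}, cons x y → cons y x
  cons_trans : ∀ {x y z}, cons x y → cons y z → cons x z
  /-- consistent elements share an immediate parent -/
  cons_parent : ∀ {x y}, cons x y → ∃ e, parent x = some e ∧ parent y = some e
  cons_refl : ∀ x e, parent x = some e → cons x x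
  /-- the consistency relation is closed under connectivity -/
  cons_conn : ∀ (e : E) (v : V), (v ∈ src e ∨ v ∈ tgt e) →
    (∃ p, parent (Sum.inl v) = some p) → cons (Sum.inl v) (Sum.inr e)
  /-- no consistency class is the total relation on the children of an edge -/
  cons_nontotal : ∀ e : E, (∃ x, parent x = some e) →
    ∃ x y, parent x = some e ∧ parent y = some e ∧ ¬ cons x y

attribute [instance] EHyp.fintV EHyp.fintE

namespace EHyp

variable {σ}

/-- The ancestor relation generated by the immediate-parent function
(the strict partial order `<` of the paper, read as "is an ancestor of"). -/
def anc (G : EHyp σ) : (G.V ⊕ G.E) → (G.V ⊕ G.E) → Prop :=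
  Relation.TransGen (fun a b => ∃ e, a = Sum.inr e ∧ G.parent b = some e)

/-- Top-level elements have no parent. -/
def TopLevel (G : EHyp σ) (x : G.V ⊕ G.E) : Prop := G.parent x = none

/-- An edge is hierarchical if it is labelled `⊥`. -/
def Hier (G : EHyp σ) (e : G.E) : Prop := G.lbl e = none

end EHyp

/-- A homomorphism of e-hypergraphs: a hypergraph homomorphism which preserves labels,
immediate parents and the consistency relation. -/
structure EHypHom (G H : EHyp σ) : Type where
  onV : G.V → H.V
  onE : G.E → H.E
  map_src : ∀ e, H.src (onE e) = (G.src e).map onV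
  map_tgt : ∀ e, H.tgt (onE e) = (G.tgt e).map onV
  map_lbl : ∀ e, H.lbl (onE e) = G.lbl e
  map_parent : ∀ x e, G.parent x = some e →
    H.parent (Sum.map onV onE x) = some (onE e)
  map_cons : ∀ x y, G.cons x y → H.cons (Sum.map onV onE x) (Sum.map onV onE y)

theorem EHypHom.ext' {σ : MSig} {G H : EHyp σ} {f g : EHypHom σ G H}
    (h1 : f.onV = g.onV) (h2 : f.onE = g.onE) : f = g := by
  cases f; cases g; cases h1; cases h2; rfl

/-- The category of e-hypergraphs over `σ` and their homomorphisms. -/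
instance EHyp.category : Category (EHyp σ) where
  Hom G H := EHypHom σ G H
  id G :=
    { onV := id, onE := id
      map_src := by simp
      map_tgt := by simp
      map_lbl := fun _ => rfl
      map_parent := by intro x e h; cases x <;> simpa using h
      map_cons := by intro x y h; cases x <;> cases y <;> simpa using h }
  comp {G H K} f g :=
    { onV := g.onV ∘ f.onV, onE := g.onE ∘ f.onE
      map_src := by intro e; simp [g.map_src, f.map_src]
      map_tgt := by intro e; simp [g.map_tgt, f.map_tgt]
      map_lbl := by intro e; simp [g.map_lbl, f.map_lbl]
      map_parent := by
        intro x e h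
        have h1 := f.map_parent x e h
        have h2 := g.map_parent _ _ h1
        cases x <;> simpa using h2
      map_cons := by
        intro x y h
        have h2 := g.map_cons _ _ (f.map_cons x y h)
        cases x <;> cases y <;> simpa using h2 }
  id_comp := by intro G H f; apply EHypHom.ext' <;> rfl
  comp_id := by intro G H f; apply EHypHom.ext' <;> rfl
  assoc := by intro G H K L f g h; apply EHypHom.ext' <;> rfl

/-!
By the symmetry of the hypotheses we may assume that the images `g v` are top-level in `Y`; by
(iii) the images `f v` share one consistency class, hence one parent `p` (if any). The pushout
is the disjoint union of `X` and `Y` with each `f v` identified with `g v`, in which every element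
of `Y` linked to some `g v` by incidences is moved under `p` and into the class of the `f v`.

Parents and consistency are first defined on the disjoint union, where consistency is a partial
equivalence relation; every identified pair lies in a single class or outside its domain, so it
descends to the quotient. The only new parent steps go from edges of `X` to elements of `Y`,
so no cycle arises. Conversely, a cocone under the span already sends the part of `Y` linked to
the `g v` under the image of `p` and into its class, because homomorphisms preserve incidences,
parents and consistency, and incident elements share their parent and consistency class; this
gives the universal property.
-/

namespace Relation

variable {α β : Type*}

theorem eq_or_of_eqvGen {r : α → α → Prop} {p : α → Prop} (hr : ∀ a b, r a b → p a ∧ p b)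
    {a b : α} (hab : EqvGen r a b) : a = b ∨ (p a ∧ p b) := by
  have hequiv : Equivalence fun a b : α => a = b ∨ (p a ∧ p b) :=
    ⟨fun _ => Or.inl rfl,
     fun h => h.elim (fun h => Or.inl h.symm) fun h => Or.inr h.symm,
     fun h h' => by
       rcases h with rfl | ⟨ha, hb⟩
       · exact h'
       · rcases h' with rfl | ⟨-, hc⟩
         exacts [Or.inr ⟨ha, hb⟩, Or.inr ⟨ha, hc⟩]⟩
  exact hequiv.eqvGen_iff.mp (hab.mono fun a b h => Or.inr (hr a b h))

/-- A partial equivalence relation descends along any map whose fibres meet its domain only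
inside a single class. -/
theorem map_apply_apply_iff {r : α → α → Prop} {q : α → β} (hsymm : ∀ {a b}, r a b → r b a)
    (htrans : ∀ {a b c}, r a b → r b c → r a c) (hq : ∀ a b, q a = q b → r a a → r a b)
    {a b : α} : Relation.Map r q q (q a) (q b) ↔ r a b := by
  refine ⟨fun ⟨c, d, hcd, hc, hd⟩ => ?_, fun h => ⟨a, b, h, rfl, rfl⟩⟩
  have hca : r c a := hq c a hc (htrans hcd (hsymm hcd))
  have hdb : r d b := hq d b hd (htrans (hsymm hcd) hcd)
  exact htrans (hsymm hca) (htrans hcd hdb)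

end Relation

open Relation

theorem not_transGen_parentStep_self {V E : Type*} (parent : V ⊕ E → Option E)
    (r : E → E → Prop) [IsTrans E r] [Std.Irrefl r]
    (hr : ∀ e e', parent (Sum.inr e) = some e' → r e' e) (x : V ⊕ E) :
    ¬ TransGen (fun a b => ∃ e, a = Sum.inr e ∧ parent b = some e) x x := by
  have key : ∀ {a b}, TransGen (fun a b => ∃ e, a = Sum.inr e ∧ parent b = some e) a b →
      ∃ e, a = Sum.inr e ∧ ∀ e', b = Sum.inr e' → r e e' := by
    intro a b h
    induction h with
    | single hab =>
      obtain ⟨e, rfl, hb⟩ := hab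
      exact ⟨e, rfl, fun e' hb' => hr e' e (hb' ▸ hb)⟩
    | tail _ hbc ih =>
      obtain ⟨e, rfl, he⟩ := ih
      obtain ⟨e₁, rfl, hc⟩ := hbc
      exact ⟨e, rfl, fun e' hc' => _root_.trans (he e₁ rfl) (hr e' e₁ (hc' ▸ hc))⟩
  intro h
  obtain ⟨e, rfl, he⟩ := key h
  exact irrefl e (he e rfl)

namespace EHyp

variable {σ : MSig}

abbrev Elem (G : EHyp σ) : Type := G.V ⊕ G.E

theorem parent_eq_of_forall_cons_iff (G : EHyp σ) {a b : G.Elem}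
    (h : ∀ x, G.cons a x ↔ G.cons b x) : G.parent a = G.parent b := by
  have key : ∀ {a b : G.Elem} {e}, (∀ x, G.cons a x ↔ G.cons b x) →
      G.parent a = some e → G.parent b = some e := by
    intro a b e h ha
    obtain ⟨e', hb, ha'⟩ := G.cons_parent ((h a).mp (G.cons_refl a e ha))
    exact hb.trans (ha'.symm.trans ha)
  exact Option.ext fun e => ⟨key h, key fun x => (h x).symm⟩

def Incident (G : EHyp σ) : G.Elem → G.Elem → Prop
  | .inl v, .inr e => v ∈ G.src e ∨ v ∈ G.tgt e
  | _, _ => False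

abbrev Linked (G : EHyp σ) : G.Elem → G.Elem → Prop := ReflTransGen (SymmGen G.Incident)

section Linked

variable {G : EHyp σ} {a b : G.Elem}

theorem Incident.parent_eq (h : G.Incident a b) : G.parent a = G.parent b := by
  match a, b, h with
  | .inl v, .inr e, h => exact G.parent_conn e v h

theorem Incident.cons (h : G.Incident a b) (ha : G.parent a ≠ none) : G.cons a b := by
  match a, b, h with
  | .inl v, .inr e, h => exact G.cons_conn e v h (Option.ne_none_iff_exists'.mp ha)

theorem parent_eq_of_linked (h : G.Linked a b) : G.parent a = G.parent b := by
  induction h with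
  | refl => rfl
  | tail _ hbc ih => exact ih.trans (hbc.elim Incident.parent_eq fun h => h.parent_eq.symm)

theorem cons_of_linked (ha : G.parent a ≠ none) (h : G.Linked a b) : G.cons a b := by
  induction h with
  | refl => exact G.cons_refl a _ (Option.ne_none_iff_exists'.mp ha).choose_spec
  | tail hab hbc ih =>
    have hb : G.parent _ ≠ none := parent_eq_of_linked hab ▸ ha
    refine G.cons_trans ih (hbc.elim (fun h => h.cons hb) fun h => G.cons_symm (h.cons ?_))
    exact h.parent_eq ▸ hb

end Linked

def EdgeAnc (G : EHyp σ) (e e' : G.E) : Prop := G.anc (Sum.inr e) (Sum.inr e')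

instance (G : EHyp σ) : IsTrans G.E G.EdgeAnc := ⟨fun _ _ _ => TransGen.trans⟩

instance (G : EHyp σ) : Std.Irrefl G.EdgeAnc := ⟨fun e => G.acyclic_parent (Sum.inr e)⟩

end EHyp

namespace EHypHom

variable {σ : MSig} {G H : EHyp σ}

def mapElem (φ : EHypHom σ G H) : G.Elem → H.Elem := Sum.map φ.onV φ.onE

theorem incident_mapElem (φ : EHypHom σ G H) {a b : G.Elem} (h : G.Incident a b) :
    H.Incident (φ.mapElem a) (φ.mapElem b) := by
  match a, b, h with
  | .inl v, .inr e, h =>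
    show φ.onV v ∈ H.src (φ.onE e) ∨ φ.onV v ∈ H.tgt (φ.onE e)
    rw [φ.map_src, φ.map_tgt]
    exact h.imp (List.mem_map_of_mem) (List.mem_map_of_mem)

theorem linked_mapElem (φ : EHypHom σ G H) {a b : G.Elem} (h : G.Linked a b) :
    H.Linked (φ.mapElem a) (φ.mapElem b) :=
  h.lift _ fun _ _ h => h.imp φ.incident_mapElem φ.incident_mapElem

end EHypHom

namespace EHyp

structure GluingSpan (σ : MSig) where
  {Z X Y : EHyp σ}
  f : Z ⟶ X
  g : Z ⟶ Y
  isEmpty_edges : IsEmpty Z.E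
  topLevel_g : ∀ v, Y.TopLevel (Sum.inl (g.onV v))
  cons_f : ∀ v w x, X.cons (Sum.inl (f.onV v)) x ↔ X.cons (Sum.inl (f.onV w)) x

namespace GluingSpan

variable {σ : MSig} (S : GluingSpan σ)

def Attached : Set S.Y.Elem := {c | ∃ v, S.Y.Linked (Sum.inl (S.g.onV v)) c}

open Classical in
noncomputable def fParent : Option S.X.E :=
  if h : Nonempty S.Z.V then S.X.parent (Sum.inl (S.f.onV h.some)) else none

theorem parent_f (v : S.Z.V) : S.X.parent (Sum.inl (S.f.onV v)) = S.fParent := by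
  rw [fParent, dif_pos ⟨v⟩]
  exact S.X.parent_eq_of_forall_cons_iff (S.cons_f v _)

theorem exists_parent_f_of_fParent_eq_some {e : S.X.E} (h : S.fParent = some e) :
    ∃ v, S.X.parent (Sum.inl (S.f.onV v)) = some e := by
  by_cases hZ : Nonempty S.Z.V
  · exact ⟨hZ.some, (S.parent_f _).trans h⟩
  · simp [fParent, dif_neg hZ] at h

theorem parent_of_mem_attached {c : S.Y.Elem} (hc : c ∈ S.Attached) : S.Y.parent c = none := by
  obtain ⟨v, hv⟩ := hc
  exact (parent_eq_of_linked hv).symm.trans (S.topLevel_g v)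

theorem mem_attached_of_symmGen {c d : S.Y.Elem} (h : SymmGen S.Y.Incident c d)
    (hc : c ∈ S.Attached) : d ∈ S.Attached :=
  let ⟨v, hv⟩ := hc; ⟨v, hv.tail h⟩

abbrev Elem : Type := S.X.Elem ⊕ S.Y.Elem

open Classical in
noncomputable def preParent : S.Elem → Option (S.X.E ⊕ S.Y.E)
  | .inl c => (S.X.parent c).map .inl
  | .inr c => if c ∈ S.Attached then S.fParent.map .inl else (S.Y.parent c).map .inr

def Merged : S.Elem → Prop
  | .inl c => ∃ v, S.X.cons (Sum.inl (S.f.onV v)) c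
  | .inr c => c ∈ S.Attached ∧ S.fParent ≠ none

def PreCons (c d : S.Elem) : Prop :=
  Sum.LiftRel S.X.cons S.Y.cons c d ∨ (S.Merged c ∧ S.Merged d)

def IsGlued (c : S.Elem) : Prop :=
  ∃ v, c = .inl (.inl (S.f.onV v)) ∨ c = .inr (.inl (S.g.onV v))

theorem mem_attached_g (v : S.Z.V) : Sum.inl (S.g.onV v) ∈ S.Attached := ⟨v, .refl⟩

theorem preParent_inr_of_mem_attached {c : S.Y.Elem} (hc : c ∈ S.Attached) :
    S.preParent (.inr c) = S.fParent.map .inl := by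
  simp only [preParent, if_pos hc]

theorem preParent_inr_of_parent {c : S.Y.Elem} {e : S.Y.E} (h : S.Y.parent c = some e) :
    S.preParent (.inr c) = some (.inr e) := by
  have hc : c ∉ S.Attached := fun hc => by simp [S.parent_of_mem_attached hc] at h
  simp only [preParent, if_neg hc, h, Option.map_some]

theorem preParent_of_merged {c : S.Elem} (hc : S.Merged c) :
    S.preParent c = S.fParent.map .inl := by
  match c, hc with
  | .inl c, ⟨v, hv⟩ =>
    obtain ⟨e, hf, hc⟩ := S.X.cons_parent hv
    simp only [preParent, hc, ← hf, S.parent_f]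
  | .inr c, ⟨hc, _⟩ => exact S.preParent_inr_of_mem_attached hc

theorem fParent_ne_none_of_merged {c : S.Elem} (hc : S.Merged c) : S.fParent ≠ none := by
  match c, hc with
  | .inl c, ⟨v, hv⟩ =>
    obtain ⟨e, hf, -⟩ := S.X.cons_parent hv
    simp [← S.parent_f v, hf]
  | .inr c, ⟨_, h⟩ => exact h

theorem merged_of_liftRel {c d : S.Elem} (h : Sum.LiftRel S.X.cons S.Y.cons c d)
    (hd : S.Merged d) : S.Merged c := by
  match c, d, h, hd with
  | .inl _, .inl _, .inl h, ⟨v, hv⟩ => exact ⟨v, S.X.cons_trans hv (S.X.cons_symm h)⟩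
  | .inr _, .inr _, .inr h, ⟨hd, _⟩ =>
    obtain ⟨e, -, hd'⟩ := S.Y.cons_parent h
    simp [S.parent_of_mem_attached hd] at hd'

theorem liftRel_cons_symm {c d : S.Elem} (h : Sum.LiftRel S.X.cons S.Y.cons c d) :
    Sum.LiftRel S.X.cons S.Y.cons d c := by
  cases h
  exacts [.inl (S.X.cons_symm ‹_›), .inr (S.Y.cons_symm ‹_›)]

variable {S} in
theorem PreCons.symm {c d : S.Elem} (h : S.PreCons c d) : S.PreCons d c :=
  h.imp S.liftRel_cons_symm And.symm

variable {S} in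
theorem PreCons.trans {c d e : S.Elem} (h : S.PreCons c d) (h' : S.PreCons d e) :
    S.PreCons c e := by
  rcases h with h | ⟨hc, hd⟩ <;> rcases h' with h' | ⟨hd', he⟩
  · left
    cases h <;> cases h'
    exacts [.inl (S.X.cons_trans ‹_› ‹_›), .inr (S.Y.cons_trans ‹_› ‹_›)]
  · exact .inr ⟨S.merged_of_liftRel h hd', he⟩
  · exact .inr ⟨hc, S.merged_of_liftRel (S.liftRel_cons_symm h') hd⟩
  · exact .inr ⟨hc, he⟩

theorem exists_preParent_of_preCons {c d : S.Elem} (h : S.PreCons c d) :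
    ∃ e, S.preParent c = some e ∧ S.preParent d = some e := by
  rcases h with (h | h) | ⟨hc, hd⟩
  · obtain ⟨e, hc, hd⟩ := S.X.cons_parent h
    exact ⟨.inl e, by simp [preParent, hc], by simp [preParent, hd]⟩
  · obtain ⟨e, hc, hd⟩ := S.Y.cons_parent h
    exact ⟨.inr e, S.preParent_inr_of_parent hc, S.preParent_inr_of_parent hd⟩
  · obtain ⟨e, he⟩ := Option.ne_none_iff_exists'.mp (S.fParent_ne_none_of_merged hc)
    exact ⟨.inl e, by simp [S.preParent_of_merged hc, he],
      by simp [S.preParent_of_merged hd, he]⟩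

theorem preCons_self_of_preParent {c : S.Elem} {e} (h : S.preParent c = some e) :
    S.PreCons c c := by
  rcases c with c | c
  · obtain ⟨e, hc, -⟩ := Option.map_eq_some_iff.mp h
    exact .inl (.inl (S.X.cons_refl c e hc))
  · by_cases hc : c ∈ S.Attached
    · have hf : S.fParent ≠ none := fun hf => by
        simp [S.preParent_inr_of_mem_attached hc, hf] at h
      exact .inr ⟨⟨hc, hf⟩, ⟨hc, hf⟩⟩
    · simp only [preParent, if_neg hc] at h
      obtain ⟨e, hc, -⟩ := Option.map_eq_some_iff.mp h
      exact .inl (.inr (S.Y.cons_refl c e hc))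

theorem preParent_of_isGlued {c : S.Elem} (hc : S.IsGlued c) :
    S.preParent c = S.fParent.map .inl := by
  obtain ⟨v, rfl | rfl⟩ := hc
  · simp only [preParent, S.parent_f]
  · exact S.preParent_inr_of_mem_attached (S.mem_attached_g v)

theorem preCons_of_isGlued {c d : S.Elem} (hc : S.IsGlued c) (hd : S.IsGlued d)
    (h : S.PreCons c c) : S.PreCons c d := by
  obtain ⟨e, hce, -⟩ := S.exists_preParent_of_preCons h
  obtain ⟨e, he, -⟩ := Option.map_eq_some_iff.mp ((S.preParent_of_isGlued hc).symm.trans hce)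
  have merged : ∀ {c}, S.IsGlued c → S.Merged c := by
    rintro _ ⟨v, rfl | rfl⟩
    exacts [⟨v, S.X.cons_refl _ e ((S.parent_f v).trans he)⟩,
      ⟨S.mem_attached_g v, by simp [he]⟩]
  exact .inr ⟨merged hc, merged hd⟩

theorem preParent_eq_of_incident {c d : S.Elem} (h : Sum.LiftRel S.X.Incident S.Y.Incident c d) :
    S.preParent c = S.preParent d := by
  rcases h with @⟨a, b, h⟩ | @⟨a, b, h⟩
  · simp only [preParent, h.parent_eq]
  · have hiff : a ∈ S.Attached ↔ b ∈ S.Attached :=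
      ⟨S.mem_attached_of_symmGen (.inl h), S.mem_attached_of_symmGen (.inr h)⟩
    simp only [preParent, h.parent_eq]
    classical exact if_congr hiff rfl rfl

theorem preCons_of_incident {c d : S.Elem} (h : Sum.LiftRel S.X.Incident S.Y.Incident c d)
    (hc : S.preParent c ≠ none) : S.PreCons c d := by
  rcases h with @⟨a, b, h⟩ | @⟨a, b, h⟩
  · exact .inl (.inl (h.cons (by simpa [preParent] using hc)))
  · by_cases ha : a ∈ S.Attached
    · have hf : S.fParent ≠ none := by simpa [S.preParent_inr_of_mem_attached ha] using hc
      exact .inr ⟨⟨ha, hf⟩, S.mem_attached_of_symmGen (.inl h) ha, hf⟩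
    · exact .inl (.inr (h.cons (by simpa [preParent, ha] using hc)))

theorem exists_child_of_preParent_eq_inl {c : S.Elem} {e : S.X.E}
    (h : S.preParent c = some (.inl e)) :
    ∃ x, S.X.parent x = some e := by
  rcases c with c | c
  · simp only [preParent, Option.map_eq_some_iff, Sum.inl.injEq, exists_eq_right] at h
    exact ⟨c, h⟩
  · by_cases hc : c ∈ S.Attached
    · simp only [S.preParent_inr_of_mem_attached hc, Option.map_eq_some_iff, Sum.inl.injEq,
        exists_eq_right] at h
      exact ⟨_, (S.exists_parent_f_of_fParent_eq_some h).choose_spec⟩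
    · simp [preParent, hc] at h

theorem exists_child_of_preParent_eq_inr {c : S.Elem} {e : S.Y.E}
    (h : S.preParent c = some (.inr e)) :
    ∃ y, c = .inr y ∧ S.Y.parent y = some e := by
  rcases c with c | c
  · simp [preParent] at h
  · by_cases hc : c ∈ S.Attached
    · simp [S.preParent_inr_of_mem_attached hc] at h
    · simp only [preParent, if_neg hc, Option.map_eq_some_iff, Sum.inr.injEq, exists_eq_right] at h
      exact ⟨c, rfl, h⟩

theorem lbl_eq_none_of_preParent {c : S.Elem} {e : S.X.E ⊕ S.Y.E} (h : S.preParent c = some e) :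
    Sum.elim S.X.lbl S.Y.lbl e = none := by
  rcases e with e | e
  · obtain ⟨x, hx⟩ := S.exists_child_of_preParent_eq_inl h
    exact S.X.parent_hier x e hx
  · obtain ⟨y, -, hy⟩ := S.exists_child_of_preParent_eq_inr h
    exact S.Y.parent_hier y e hy

theorem exists_not_preCons {e : S.X.E ⊕ S.Y.E} (h : ∃ c, S.preParent c = some e) :
    ∃ c d, S.preParent c = some e ∧ S.preParent d = some e ∧ ¬ S.PreCons c d := by
  obtain ⟨c, hc⟩ := h
  rcases e with e | e
  · obtain ⟨x₁, x₂, h₁, h₂, hx⟩ :=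
      S.X.cons_nontotal e (S.exists_child_of_preParent_eq_inl hc)
    refine ⟨.inl x₁, .inl x₂, by simp [preParent, h₁], by simp [preParent, h₂], ?_⟩
    rintro ((h | h) | ⟨⟨v₁, hv₁⟩, ⟨v₂, hv₂⟩⟩)
    · exact hx h
    · exact hx (S.X.cons_trans (S.X.cons_symm hv₁) ((S.cons_f v₂ v₁ _).mp hv₂))
  · obtain ⟨y, -, hy⟩ := S.exists_child_of_preParent_eq_inr hc
    obtain ⟨y₁, y₂, h₁, h₂, hy⟩ := S.Y.cons_nontotal e ⟨_, hy⟩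
    refine ⟨.inr y₁, .inr y₂, S.preParent_inr_of_parent h₁, S.preParent_inr_of_parent h₂,
      ?_⟩
    rintro ((h | h) | ⟨⟨hy₁, -⟩, -⟩)
    · exact hy h
    · simp [S.parent_of_mem_attached hy₁] at h₁

theorem lex_of_preParent_edge {e : S.X.E ⊕ S.Y.E} {e'}
    (h : S.preParent (Sum.map .inr .inr e) = some e') :
    Sum.Lex S.X.EdgeAnc S.Y.EdgeAnc e' e := by
  rcases e with e | e
  · obtain ⟨e', he', rfl⟩ := Option.map_eq_some_iff.mp h
    exact .inl (.single ⟨e', rfl, he'⟩)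
  · by_cases he : Sum.inr e ∈ S.Attached
    · obtain ⟨e', -, rfl⟩ :=
        Option.map_eq_some_iff.mp (S.preParent_inr_of_mem_attached he ▸ h)
      exact .sep _ _
    · simp only [Sum.map_inr, preParent, if_neg he] at h
      obtain ⟨e', he', rfl⟩ := Option.map_eq_some_iff.mp h
      exact .inr (.single ⟨e', rfl, he'⟩)

def Glue (a b : S.X.V ⊕ S.Y.V) : Prop := ∃ v, a = .inl (S.f.onV v) ∧ b = .inr (S.g.onV v)

def ι : S.Elem → Quot S.Glue ⊕ (S.X.E ⊕ S.Y.E) :=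
  Sum.elim (Sum.map (fun x => Quot.mk _ (.inl x)) .inl)
    (Sum.map (fun y => Quot.mk _ (.inr y)) .inr)

theorem ι_surjective : Function.Surjective S.ι := by
  rintro (q | e | e)
  · obtain ⟨x | y, rfl⟩ := Quot.mk_surjective q
    exacts [⟨.inl (.inl x), rfl⟩, ⟨.inr (.inl y), rfl⟩]
  · exact ⟨.inl (.inr e), rfl⟩
  · exact ⟨.inr (.inr e), rfl⟩

theorem eq_or_isGlued_of_ι_eq {c d : S.Elem} (h : S.ι c = S.ι d) :
    c = d ∨ (S.IsGlued c ∧ S.IsGlued d) := by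
  have key : ∀ a b, Quot.mk S.Glue a = Quot.mk _ b →
      (Sum.map Sum.inl Sum.inl a : S.Elem) = Sum.map Sum.inl Sum.inl b ∨
      (S.IsGlued (Sum.map Sum.inl Sum.inl a) ∧ S.IsGlued (Sum.map Sum.inl Sum.inl b)) := by
    intro a b hab
    refine (Relation.eq_or_of_eqvGen (p := fun a => S.IsGlued (Sum.map Sum.inl Sum.inl a)) ?_
      (Quot.eqvGen_exact hab)).imp (congrArg _) id
    rintro _ _ ⟨v, rfl, rfl⟩
    exact ⟨⟨v, .inl rfl⟩, ⟨v, .inr rfl⟩⟩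
  rcases c with (x | e) | (y | e) <;> rcases d with (x' | e') | (y' | e') <;>
    first | exact key _ _ (Sum.inl.inj h) | simp_all [ι]

theorem map_preCons_ι_iff {c d : S.Elem} :
    Relation.Map S.PreCons S.ι S.ι (S.ι c) (S.ι d) ↔ S.PreCons c d :=
  Relation.map_apply_apply_iff (r := S.PreCons) (q := S.ι) PreCons.symm PreCons.trans
    fun _ _ h hc => (S.eq_or_isGlued_of_ι_eq h).elim (fun h => h ▸ hc)
      fun ⟨hc', hd'⟩ => S.preCons_of_isGlued hc' hd' hc

noncomputable def pushoutParent : Quot S.Glue ⊕ (S.X.E ⊕ S.Y.E) → Option (S.X.E ⊕ S.Y.E) :=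
  Sum.elim
    (Quot.lift (fun a => S.preParent (Sum.map .inl .inl a)) fun _ _ ⟨v, ha, hb⟩ => by
      subst ha hb
      exact (S.preParent_of_isGlued ⟨v, .inl rfl⟩).trans
        (S.preParent_of_isGlued ⟨v, .inr rfl⟩).symm)
    fun e => S.preParent (Sum.map .inr .inr e)

theorem pushoutParent_ι (c : S.Elem) : S.pushoutParent (S.ι c) = S.preParent c := by
  rcases c with (x | e) | (y | e) <;> rfl

def glueLists (lX : S.X.E → List S.X.V) (lY : S.Y.E → List S.Y.V) :
    S.X.E ⊕ S.Y.E → List (Quot S.Glue) :=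
  Sum.elim (fun e => (lX e).map fun x => Quot.mk _ (.inl x))
    fun e => (lY e).map fun y => Quot.mk _ (.inr y)

theorem exists_incident_of_mem {v : Quot S.Glue} {e : S.X.E ⊕ S.Y.E}
    (h : v ∈ S.glueLists S.X.src S.Y.src e ∨ v ∈ S.glueLists S.X.tgt S.Y.tgt e) :
    ∃ c d, Sum.LiftRel S.X.Incident S.Y.Incident c d ∧ S.ι c = .inl v ∧ S.ι d = .inr e := by
  rcases e with e | e
  · obtain ⟨x, hx, rfl⟩ : ∃ x, (x ∈ S.X.src e ∨ x ∈ S.X.tgt e) ∧ Quot.mk _ (.inl x) = v := by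
      simpa [glueLists, or_and_right, exists_or] using h
    exact ⟨.inl (.inl x), .inl (.inr e), .inl hx, rfl, rfl⟩
  · obtain ⟨y, hy, rfl⟩ : ∃ y, (y ∈ S.Y.src e ∨ y ∈ S.Y.tgt e) ∧ Quot.mk _ (.inr y) = v := by
      simpa [glueLists, or_and_right, exists_or] using h
    exact ⟨.inr (.inl y), .inr (.inr e), .inr hy, rfl, rfl⟩

noncomputable def pushout : EHyp σ where
  V := Quot S.Glue
  E := S.X.E ⊕ S.Y.E
  fintV := by classical exact Fintype.ofSurjective _ Quot.mk_surjective
  fintE := inferInstance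
  src := S.glueLists S.X.src S.Y.src
  tgt := S.glueLists S.X.tgt S.Y.tgt
  lbl := Sum.elim S.X.lbl S.Y.lbl
  parent := S.pushoutParent
  cons := Relation.Map S.PreCons S.ι S.ι
  lbl_ar := by
    rintro (e | e) g h
    · simpa [glueLists] using S.X.lbl_ar e g h
    · simpa [glueLists] using S.Y.lbl_ar e g h
  parent_hier p e h := by
    obtain ⟨c, rfl⟩ := S.ι_surjective p
    exact S.lbl_eq_none_of_preParent (S.pushoutParent_ι c ▸ h)
  acyclic_parent :=
    not_transGen_parentStep_self _ (Sum.Lex S.X.EdgeAnc S.Y.EdgeAnc) fun _ _ =>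
      S.lex_of_preParent_edge
  parent_conn e v h := by
    obtain ⟨c, d, hcd, hc, hd⟩ := S.exists_incident_of_mem h
    rw [← hc, ← hd, pushoutParent_ι, pushoutParent_ι]
    exact S.preParent_eq_of_incident hcd
  maximal_lbl e h := by
    rcases e with e | e
    · refine S.X.maximal_lbl e fun x hx => h (S.ι (.inl x)) ?_
      simp [pushoutParent_ι, preParent, hx]
    · refine S.Y.maximal_lbl e fun y hy => h (S.ι (.inr y)) ?_
      rw [pushoutParent_ι, S.preParent_inr_of_parent hy]
  cons_symm := fun ⟨c, d, h, hc, hd⟩ => ⟨d, c, h.symm, hd, hc⟩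
  cons_trans := fun ⟨c, _, h, hc, hd⟩ ⟨d', e, h', hd', he⟩ => by
    subst hc hd he
    exact ⟨c, e, h.trans (S.map_preCons_ι_iff.mp ⟨d', e, h', hd', rfl⟩), rfl, rfl⟩
  cons_parent := fun ⟨c, d, h, hc, hd⟩ => by
    subst hc hd
    simpa only [pushoutParent_ι] using S.exists_preParent_of_preCons h
  cons_refl p e h := by
    obtain ⟨c, rfl⟩ := S.ι_surjective p
    exact ⟨c, c, S.preCons_self_of_preParent (S.pushoutParent_ι c ▸ h), rfl, rfl⟩
  cons_conn e v hm := fun ⟨p, hp⟩ => by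
    obtain ⟨c, d, hcd, hc, hd⟩ := S.exists_incident_of_mem hm
    refine ⟨c, d, S.preCons_of_incident hcd ?_, hc, hd⟩
    simp [← S.pushoutParent_ι, hc, hp]
  cons_nontotal e := fun ⟨p, hp⟩ => by
    obtain ⟨c, rfl⟩ := S.ι_surjective p
    obtain ⟨c, d, hc, hd, hcd⟩ := S.exists_not_preCons ⟨c, S.pushoutParent_ι c ▸ hp⟩
    refine ⟨S.ι c, S.ι d, ?_, ?_, fun h => hcd (S.map_preCons_ι_iff.mp h)⟩ <;>
      rwa [pushoutParent_ι]

noncomputable def inX : S.X ⟶ S.pushout where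
  onV x := Quot.mk _ (.inl x)
  onE := .inl
  map_src _ := rfl
  map_tgt _ := rfl
  map_lbl _ := rfl
  map_parent c e h := by
    change S.pushoutParent (S.ι (.inl c)) = _
    rw [pushoutParent_ι, preParent, h]
    rfl
  map_cons c d h := ⟨.inl c, .inl d, .inl (.inl h), rfl, rfl⟩

noncomputable def inY : S.Y ⟶ S.pushout where
  onV y := Quot.mk _ (.inr y)
  onE := .inr
  map_src _ := rfl
  map_tgt _ := rfl
  map_lbl _ := rfl
  map_parent c e h := by
    change S.pushoutParent (S.ι (.inr c)) = _
    rw [pushoutParent_ι, S.preParent_inr_of_parent h]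
    rfl
  map_cons c d h := ⟨.inr c, .inr d, .inl (.inr h), rfl, rfl⟩

theorem comm : S.f ≫ S.inX = S.g ≫ S.inY :=
  EHypHom.ext' (funext fun v => Quot.sound ⟨v, rfl, rfl⟩) (funext S.isEmpty_edges.elim)

section Desc

variable {W : EHyp σ} (a : S.X ⟶ W) (b : S.Y ⟶ W)

theorem onV_f_eq (hab : S.f ≫ a = S.g ≫ b) (v : S.Z.V) :
    a.onV (S.f.onV v) = b.onV (S.g.onV v) :=
  congrFun (congrArg EHypHom.onV hab) v

theorem parent_onV_g (hab : S.f ≫ a = S.g ≫ b) {v : S.Z.V} {e : S.X.E}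
    (he : S.fParent = some e) : W.parent (.inl (b.onV (S.g.onV v))) = some (a.onE e) := by
  rw [← S.onV_f_eq a b hab]
  exact a.map_parent _ e ((S.parent_f v).trans he)

def descElem : S.Elem → W.Elem := Sum.elim (EHypHom.mapElem a) (EHypHom.mapElem b)

theorem parent_descElem (hab : S.f ≫ a = S.g ≫ b) {c : S.Elem} {e : S.X.E ⊕ S.Y.E}
    (h : S.preParent c = some e) : W.parent (S.descElem a b c) = some (Sum.elim a.onE b.onE e) := by
  rcases c with c | c
  · obtain ⟨e, he, rfl⟩ := Option.map_eq_some_iff.mp h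
    exact a.map_parent c e he
  · by_cases hc : c ∈ S.Attached
    · obtain ⟨e, he, rfl⟩ :=
        Option.map_eq_some_iff.mp (S.preParent_inr_of_mem_attached hc ▸ h)
      obtain ⟨v, hv⟩ := hc
      exact (parent_eq_of_linked (EHypHom.linked_mapElem b hv)).symm.trans
        (S.parent_onV_g a b hab he)
    · simp only [preParent, if_neg hc] at h
      obtain ⟨e, he, rfl⟩ := Option.map_eq_some_iff.mp h
      exact b.map_parent c e he

theorem cons_descElem_of_merged (hab : S.f ≫ a = S.g ≫ b) (v₀ : S.Z.V) {c : S.Elem}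
    (hc : S.Merged c) : W.cons (.inl (a.onV (S.f.onV v₀))) (S.descElem a b c) := by
  match c, hc with
  | .inl x, ⟨v, hv⟩ => exact a.map_cons _ _ ((S.cons_f v v₀ x).mp hv)
  | .inr y, ⟨⟨v, hv⟩, hf⟩ =>
    obtain ⟨e, he⟩ := Option.ne_none_iff_exists'.mp hf
    have hfv : S.X.cons (.inl (S.f.onV v₀)) (.inl (S.f.onV v)) :=
      (S.cons_f v v₀ _).mp (S.X.cons_refl _ e ((S.parent_f v).trans he))
    have hgy : W.cons (.inl (b.onV (S.g.onV v))) (EHypHom.mapElem b y) :=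
      cons_of_linked (by simp [S.parent_onV_g a b hab he]) (EHypHom.linked_mapElem b hv)
    exact W.cons_trans (S.onV_f_eq a b hab v ▸ a.map_cons _ _ hfv) hgy

theorem cons_descElem (hab : S.f ≫ a = S.g ≫ b) {c d : S.Elem} (h : S.PreCons c d) :
    W.cons (S.descElem a b c) (S.descElem a b d) := by
  rcases h with (h | h) | ⟨hc, hd⟩
  · exact a.map_cons _ _ h
  · exact b.map_cons _ _ h
  · obtain ⟨e, he⟩ := Option.ne_none_iff_exists'.mp (S.fParent_ne_none_of_merged hc)
    obtain ⟨v₀, -⟩ := S.exists_parent_f_of_fParent_eq_some he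
    exact W.cons_trans (W.cons_symm (S.cons_descElem_of_merged a b hab v₀ hc))
      (S.cons_descElem_of_merged a b hab v₀ hd)

def descV (hab : S.f ≫ a = S.g ≫ b) : Quot S.Glue → W.V :=
  Quot.lift (Sum.elim a.onV b.onV) fun _ _ ⟨v, ha, hb⟩ => by
    subst ha hb
    exact S.onV_f_eq a b hab v

theorem map_descV_ι (hab : S.f ≫ a = S.g ≫ b) (c : S.Elem) :
    Sum.map (S.descV a b hab) (Sum.elim a.onE b.onE) (S.ι c) = S.descElem a b c := by
  rcases c with (x | e) | (y | e) <;> rfl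

noncomputable def desc (hab : S.f ≫ a = S.g ≫ b) : S.pushout ⟶ W where
  onV := S.descV a b hab
  onE := Sum.elim a.onE b.onE
  map_src e := by
    rcases e with e | e <;> simp [pushout, glueLists, descV, a.map_src, b.map_src]
  map_tgt e := by
    rcases e with e | e <;> simp [pushout, glueLists, descV, a.map_tgt, b.map_tgt]
  map_lbl e := by
    rcases e with e | e
    exacts [a.map_lbl e, b.map_lbl e]
  map_parent p e h := by
    obtain ⟨c, rfl⟩ := S.ι_surjective p
    exact (congrArg W.parent (S.map_descV_ι a b hab c)).trans
      (S.parent_descElem a b hab ((S.pushoutParent_ι c).symm.trans h))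
  map_cons := by
    rintro _ _ ⟨c, d, h, rfl, rfl⟩
    exact (congrArg₂ W.cons (S.map_descV_ι a b hab c) (S.map_descV_ι a b hab d)).mpr
      (S.cons_descElem a b hab h)

end Desc

theorem isPushout : IsPushout S.f S.g S.inX S.inY := by
  refine .of_isColimit (Limits.PushoutCocone.IsColimit.mk S.comm
    (fun s => S.desc s.inl s.inr s.condition) (fun _ => EHypHom.ext' rfl rfl)
    (fun _ => EHypHom.ext' rfl rfl) fun s m hX hY => ?_)
  refine EHypHom.ext' (funext fun q => ?_) (funext fun e => ?_)
  · obtain ⟨x | y, rfl⟩ := Quot.mk_surjective q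
    exacts [congrFun (congrArg EHypHom.onV hX) x, congrFun (congrArg EHypHom.onV hY) y]
  · rcases e with e | e
    exacts [congrFun (congrArg EHypHom.onE hX) e, congrFun (congrArg EHypHom.onE hY) e]

end GluingSpan

end EHyp

theorem EHyp.pushout_exists_general {σ : MSig} {Z X Y : EHyp σ} (f : Z ⟶ X) (g : Z ⟶ Y)
    (hdiscrete : IsEmpty Z.E)
    (hexcl₂ : ∀ v : Z.V, (∃ y, Y.anc y (Sum.inl (g.onV v))) →
      ¬ ∃ x, X.anc x (Sum.inl (f.onV v)))
    (hconsX : ∀ v w : Z.V, ∀ x,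
      X.cons (Sum.inl (f.onV v)) x ↔ X.cons (Sum.inl (f.onV w)) x)
    (hconsY : ∀ v w : Z.V, ∀ y,
      Y.cons (Sum.inl (g.onV v)) y ↔ Y.cons (Sum.inl (g.onV w)) y) :
    ∃ (P : EHyp σ) (inX : X ⟶ P) (inY : Y ⟶ P), IsPushout f g inX inY := by
  by_cases hY : ∀ v, Y.TopLevel (Sum.inl (g.onV v))
  · exact ⟨_, _, _, (GluingSpan.mk f g hdiscrete hY hconsX).isPushout⟩
  obtain ⟨v₀, hv₀⟩ := not_forall.mp hY
  obtain ⟨e₀, he₀⟩ := Option.ne_none_iff_exists'.mp hv₀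
  have hX : ∀ v, X.TopLevel (Sum.inl (f.onV v)) := by
    intro v
    have hgv : Y.parent (Sum.inl (g.onV v)) = some e₀ :=
      (Y.parent_eq_of_forall_cons_iff (hconsY v v₀)).trans he₀
    refine Option.eq_none_iff_forall_ne_some.mpr fun e hfv => hexcl₂ v ?_ ?_
    exacts [⟨_, .single ⟨e₀, rfl, hgv⟩⟩, ⟨_, .single ⟨e, rfl, hfv⟩⟩]
  exact ⟨_, _, _, (GluingSpan.mk g f hdiscrete hX hconsY).isPushout.flip⟩

/-- **Existence of pushouts in `EHyp(σ)`.**  Let `Z` be a discrete e-hypergraph and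
`f : Z → X`, `g : Z → Y` e-hypergraph homomorphisms such that (i) the images under each leg
of any two vertices of `Z` have the same set of parents, (ii) no vertex of `Z` has a parent
under both legs, and (iii) the images under each leg of any two vertices of `Z` have the
same consistency class.  Then the pushout `X +_{f,g} Y` of the span `Y ← Z → X` exists in
`EHyp(σ)`. -/
theorem EHyp.pushout_exists {σ : MSig} {Z X Y : EHyp σ} (f : Z ⟶ X) (g : Z ⟶ Y)
    (hdiscrete : IsEmpty Z.E)
    (hparentsX : ∀ v w : Z.V, ∀ x,
      X.anc x (Sum.inl (f.onV v)) ↔ X.anc x (Sum.inl (f.onV w)))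
    (hparentsY : ∀ v w : Z.V, ∀ y,
      Y.anc y (Sum.inl (g.onV v)) ↔ Y.anc y (Sum.inl (g.onV w)))
    (hexcl₁ : ∀ v : Z.V, (∃ x, X.anc x (Sum.inl (f.onV v))) →
      ¬ ∃ y, Y.anc y (Sum.inl (g.onV v)))
    (hexcl₂ : ∀ v : Z.V, (∃ y, Y.anc y (Sum.inl (g.onV v))) →
      ¬ ∃ x, X.anc x (Sum.inl (f.onV v)))
    (hconsX : ∀ v w : Z.V, ∀ x,
      X.cons (Sum.inl (f.onV v)) x ↔ X.cons (Sum.inl (f.onV w)) x)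
    (hconsY : ∀ v w : Z.V, ∀ y,
      Y.cons (Sum.inl (g.onV v)) y ↔ Y.cons (Sum.inl (g.onV w)) y) :
    ∃ (P : EHyp σ) (inX : X ⟶ P) (inY : Y ⟶ P), IsPushout f g inX inY :=
  EHyp.pushout_exists_general f g hdiscrete hexcl₂ hconsX hconsY
end

section
/- Let Σ be a monoidal signature and let Y ← Z → X be a span in EHyp(Σ) satisfying the hypotheses of the pushout-existence theorem (Z discrete; equal parent-sets and equal consistency classes of the images of any two vertices of Z under each leg; and no vertex of Z having a parent under both legs). If both legs f : Z → X and g : Z → Y are monomorphisms, then the two pushout injections X → X +_{f,g} Y and Y → X +_{f,g} Y are also monomorphisms. -/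
open CategoryTheory

variable (σ : MSig)

/-! It suffices to find one commuting cocone `X → T ← Y` with monic legs: the mediating
map out of the pushout then makes both injections monic. `T` is built by hand: it adds to
`X` the vertices of `Y` outside the image of `g` and all edges of `Y`. By exclusivity the
glued vertices are top-level on one side, say in `X`; if they share a parent `r` in `Y`,
the whole top level of `X` is hung below `r`, inside the consistency class of the glued
vertices. Both legs are injective, and injective homomorphisms are monic. -/

open Function Relation

theorem Relation.not_transGen_self_of_map {α β : Type*} {r : α → α → Prop} {s : β → β → Prop}
    [IsTrans β s] [Std.Irrefl s] (φ : α → β) (h : ∀ a b, r a b → s (φ a) (φ b)) (a : α) :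
    ¬ TransGen r a a := fun hr => by
  have := TransGen.lift φ h a a hr
  rw [transGen_eq_self] at this
  exact irrefl _ this

theorem List.exists_of_mem_map_or {α β : Type*} {l₁ l₂ : List α} {φ : α → β} {b : β}
    (h : b ∈ l₁.map φ ∨ b ∈ l₂.map φ) : ∃ a, (a ∈ l₁ ∨ a ∈ l₂) ∧ φ a = b := by
  simp only [mem_map] at h
  rcases h with ⟨a, ha, rfl⟩ | ⟨a, ha, rfl⟩
  exacts [⟨a, .inl ha, rfl⟩, ⟨a, .inr ha, rfl⟩]

namespace CategoryTheory.IsPushout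

variable {C : Type*} [Category C] {Z X Y P T : C} {f : Z ⟶ X} {g : Z ⟶ Y} {inl : X ⟶ P}
  {inr : Y ⟶ P}

theorem mono_inl_of_cocone (h : IsPushout f g inl inr) {jX : X ⟶ T} {jY : Y ⟶ T}
    (w : f ≫ jX = g ≫ jY) [Mono jX] : Mono inl :=
  mono_of_mono_fac (h.inl_desc jX jY w)

theorem mono_inr_of_cocone (h : IsPushout f g inl inr) {jX : X ⟶ T} {jY : Y ⟶ T}
    (w : f ≫ jX = g ≫ jY) [Mono jY] : Mono inr :=
  mono_of_mono_fac (h.inr_desc jX jY w)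

end CategoryTheory.IsPushout

namespace EHyp

variable {σ}

section Mono

def point (σ : MSig) : EHyp σ where
  V := Unit
  E := Empty
  src e := e.elim
  tgt e := e.elim
  lbl e := e.elim
  parent _ := none
  cons _ _ := False
  lbl_ar e := e.elim
  parent_hier _ e := e.elim
  acyclic_parent _ h := by
    obtain ⟨e, -⟩ := (TransGen.tail'_iff.mp h).choose_spec.2
    exact e.elim
  parent_conn e := e.elim
  maximal_lbl e := e.elim
  cons_symm h := h
  cons_trans h _ := h
  cons_parent h := h.elim
  cons_refl _ e := e.elim
  cons_conn e := e.elim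
  cons_nontotal e := e.elim

def pointHom {G : EHyp σ} (v : G.V) : point σ ⟶ G where
  onV _ := v
  onE e := e.elim
  map_src e := e.elim
  map_tgt e := e.elim
  map_lbl e := e.elim
  map_parent _ e _ := e.elim
  map_cons _ _ h := h.elim

theorem injective_onV_of_mono {G H : EHyp σ} (φ : G ⟶ H) [Mono φ] : Injective φ.onV :=
  fun v w h => congrArg (fun ψ : point σ ⟶ G => ψ.onV ()) <|
    (cancel_mono φ (g := pointHom v) (h := pointHom w)).mp <|
      EHypHom.ext' (funext fun _ => h) (funext fun e => e.elim)

theorem mono_of_injective {G H : EHyp σ} (φ : G ⟶ H) (hV : Injective φ.onV)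
    (hE : Injective φ.onE) : Mono φ :=
  ⟨fun _ _ h => EHypHom.ext' (funext fun x => hV (congrFun (congrArg EHypHom.onV h) x))
    (funext fun e => hE (congrFun (congrArg EHypHom.onE h) e))⟩

end Mono

section Ancestors

variable {G : EHyp σ}

instance : IsTrans (G.V ⊕ G.E) G.anc :=
  inferInstanceAs (IsTrans _ (TransGen _))

instance : Std.Irrefl G.anc := ⟨G.acyclic_parent⟩

theorem anc_of_parent_eq_some {a : G.V ⊕ G.E} {e : G.E} (h : G.parent a = some e) :
    G.anc (.inr e) a :=
  .single ⟨e, rfl, h⟩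

theorem parent_eq_some_of_anc_iff {a b : G.V ⊕ G.E} (h : ∀ x, G.anc x a ↔ G.anc x b)
    {q : G.E} (hq : G.parent a = some q) : G.parent b = some q := by
  obtain ⟨c, hqc, e, rfl, hb⟩ := TransGen.tail'_iff.mp ((h _).mp (anc_of_parent_eq_some hq))
  rcases reflTransGen_iff_eq_or_transGen.mp hqc with hc | hqe
  · rwa [← Sum.inr.inj hc]
  -- otherwise the parent `e` of `b` lies strictly below `q`, yet is an ancestor of `a`
  obtain ⟨c, hec, e', rfl, ha⟩ := TransGen.tail'_iff.mp ((h _).mpr (anc_of_parent_eq_some hb))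
  obtain rfl : e' = q := Option.some.inj (ha.symm.trans hq)
  exact (G.acyclic_parent _ (TransGen.trans_right hec hqe)).elim

theorem parent_eq_of_anc_iff {a b : G.V ⊕ G.E} (h : ∀ x, G.anc x a ↔ G.anc x b) :
    G.parent a = G.parent b :=
  Option.ext fun _ =>
    ⟨parent_eq_some_of_anc_iff h, parent_eq_some_of_anc_iff fun x => (h x).symm⟩

end Ancestors

section Glue

variable {Z X Y : EHyp σ} {f : Z ⟶ X} {g : Z ⟶ Y}

abbrev FreeV (g : Z ⟶ Y) : Type := {y : Y.V // y ∉ Set.range g.onV}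

open Classical in
noncomputable def glueV (f : Z ⟶ X) (g : Z ⟶ Y) (y : Y.V) : X.V ⊕ FreeV g :=
  if h : y ∈ Set.range g.onV then .inl (f.onV h.choose) else .inr ⟨y, h⟩

theorem glueV_onV (hg : Injective g.onV) (v : Z.V) : glueV f g (g.onV v) = .inl (f.onV v) := by
  have h : g.onV v ∈ Set.range g.onV := ⟨v, rfl⟩
  rw [glueV, dif_pos h, hg h.choose_spec]

theorem glueV_of_notMem {y : Y.V} (h : y ∉ Set.range g.onV) : glueV f g y = .inr ⟨y, h⟩ :=
  dif_neg h

theorem glueV_injective (hf : Injective f.onV) (hg : Injective g.onV) :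
    Injective (glueV f g) := by
  intro y₁ y₂ h
  by_cases h₁ : y₁ ∈ Set.range g.onV <;> by_cases h₂ : y₂ ∈ Set.range g.onV
  · obtain ⟨v₁, rfl⟩ := h₁
    obtain ⟨v₂, rfl⟩ := h₂
    rw [glueV_onV hg, glueV_onV hg] at h
    exact congrArg g.onV (hf (Sum.inl.inj h))
  · obtain ⟨v₁, rfl⟩ := h₁
    rw [glueV_onV hg, glueV_of_notMem h₂] at h
    cases h
  · obtain ⟨v₂, rfl⟩ := h₂
    rw [glueV_onV hg, glueV_of_notMem h₁] at h
    cases h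
  · rw [glueV_of_notMem h₁, glueV_of_notMem h₂] at h
    exact congrArg Subtype.val (Sum.inr.inj h)

/-- Sorts an element of the glued e-hypergraph into an element of `X` (glued vertices
included) or of `Y`; its parent and consistency are read off there. -/
def origin (g : Z ⟶ Y) : (X.V ⊕ FreeV g) ⊕ (X.E ⊕ Y.E) → (X.V ⊕ X.E) ⊕ (Y.V ⊕ Y.E)
  | .inl (.inl x) => .inl (.inl x)
  | .inl (.inr y) => .inr (.inl y.1)
  | .inr e => Sum.map .inr .inr e

def ofX (g : Z ⟶ Y) (x : X.V ⊕ X.E) : (X.V ⊕ FreeV g) ⊕ (X.E ⊕ Y.E) :=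
  Sum.map .inl .inl x

noncomputable def ofY (f : Z ⟶ X) (g : Z ⟶ Y) (y : Y.V ⊕ Y.E) : (X.V ⊕ FreeV g) ⊕ (X.E ⊕ Y.E) :=
  Sum.map (glueV f g) .inr y

theorem origin_ofX (x : X.V ⊕ X.E) : origin g (ofX g x) = .inl x := by
  cases x <;> rfl

theorem origin_ofY_onV (hg : Injective g.onV) (v : Z.V) :
    origin g (ofY f g (.inl (g.onV v))) = .inl (.inl (f.onV v)) := by
  simp only [ofY, Sum.map_inl, glueV_onV hg]
  rfl

theorem ofY_cases (y : Y.V ⊕ Y.E) :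
    (∃ v, y = .inl (g.onV v)) ∨ origin g (ofY f g y) = .inr y := by
  rcases y with y | e
  · by_cases h : y ∈ Set.range g.onV
    · obtain ⟨v, rfl⟩ := h
      exact .inl ⟨v, rfl⟩
    · right
      simp only [ofY, Sum.map_inl, glueV_of_notMem h]
      rfl
  · exact .inr rfl

/-- Top-level elements of `X` become children of `r?` when it is an edge. -/
def glueParent (r? : Option Y.E) : (X.V ⊕ X.E) ⊕ (Y.V ⊕ Y.E) → Option (X.E ⊕ Y.E)
  | .inl x => (X.parent x).elim (r?.map .inr) (some ∘ .inl)
  | .inr y => (Y.parent y).map .inr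

variable {r? : Option Y.E}

theorem glueParent_inl_of_some {x : X.V ⊕ X.E} {p : X.E} (h : X.parent x = some p) :
    glueParent r? (.inl x) = some (.inl p) := by
  simp [glueParent, h]

theorem glueParent_inl_of_none {x : X.V ⊕ X.E} (h : X.parent x = none) :
    glueParent r? (.inl x) = r?.map .inr := by
  simp [glueParent, h]

theorem glueParent_inl_congr {a b : X.V ⊕ X.E} (h : X.parent a = X.parent b) :
    glueParent r? (.inl a) = glueParent r? (.inl b) := by
  simp only [glueParent, h]

theorem glueParent_eq_some_inl {w : (X.V ⊕ X.E) ⊕ (Y.V ⊕ Y.E)} {p : X.E} :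
    glueParent r? w = some (.inl p) ↔ ∃ x, w = .inl x ∧ X.parent x = some p := by
  rcases w with x | y
  · cases h : X.parent x <;> simp [glueParent, h]
  · simp [glueParent]

theorem glueParent_eq_some_inr {w : (X.V ⊕ X.E) ⊕ (Y.V ⊕ Y.E)} {q : Y.E} :
    glueParent r? w = some (.inr q) ↔
      (∃ x, w = .inl x ∧ X.parent x = none ∧ r? = some q) ∨
        ∃ y, w = .inr y ∧ Y.parent y = some q := by
  rcases w with x | y
  · cases h : X.parent x <;> simp [glueParent, h]
  · simp [glueParent]

theorem exists_parent_eq_of_glueParent_eq_some_inr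
    (hr : ∀ r, r? = some r → ∃ y, Y.parent y = some r)
    {w : (X.V ⊕ X.E) ⊕ (Y.V ⊕ Y.E)} {q : Y.E} (h : glueParent r? w = some (.inr q)) :
    ∃ y, Y.parent y = some q := by
  rcases glueParent_eq_some_inr.mp h with ⟨-, -, -, hq⟩ | ⟨y, -, hy⟩
  exacts [hr q hq, ⟨y, hy⟩]

/-- Acyclicity of the glued e-hypergraph: `X` may hang below an edge of `Y`, never the
other way round. -/
theorem lex_of_glueParent_eq_some {w : (X.V ⊕ X.E) ⊕ (Y.V ⊕ Y.E)} {e : X.E ⊕ Y.E}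
    (h : glueParent r? w = some e) :
    Sum.Lex Y.anc X.anc (Sum.map .inr .inr e).swap w.swap := by
  rcases e with p | q
  · obtain ⟨x, rfl, hx⟩ := glueParent_eq_some_inl.mp h
    exact .inr (anc_of_parent_eq_some hx)
  · rcases glueParent_eq_some_inr.mp h with ⟨x, rfl, -⟩ | ⟨y, rfl, hy⟩
    exacts [.sep _ _, .inl (anc_of_parent_eq_some hy)]

/-- The consistency class, below `r?`, of the glued vertices: it absorbs the top level
of `X`. -/
def glueClass (g : Z ⟶ Y) (r? : Option Y.E) : (X.V ⊕ X.E) ⊕ (Y.V ⊕ Y.E) → Prop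
  | .inl x => X.parent x = none ∧ r? ≠ none
  | .inr y => ∃ v, Y.cons (.inl (g.onV v)) y

def glueCons (g : Z ⟶ Y) (r? : Option Y.E) (a b : (X.V ⊕ X.E) ⊕ (Y.V ⊕ Y.E)) : Prop :=
  Sum.LiftRel X.cons Y.cons a b ∨ (glueClass g r? a ∧ glueClass g r? b)

variable {a b c : (X.V ⊕ X.E) ⊕ (Y.V ⊕ Y.E)}

theorem liftRel_cons_symm (h : Sum.LiftRel X.cons Y.cons a b) :
    Sum.LiftRel X.cons Y.cons b a := by
  cases h with
  | inl h => exact .inl (X.cons_symm h)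
  | inr h => exact .inr (Y.cons_symm h)

theorem glueClass_of_liftRel (ha : glueClass g r? a) (h : Sum.LiftRel X.cons Y.cons a b) :
    glueClass g r? b := by
  cases h with
  | inl h =>
    obtain ⟨e, he, -⟩ := X.cons_parent h
    obtain ⟨hx, -⟩ := ha
    simp [hx] at he
  | inr h =>
    obtain ⟨v, hv⟩ := ha
    exact ⟨v, Y.cons_trans hv h⟩

theorem glueCons_symm (h : glueCons g r? a b) : glueCons g r? b a := by
  rcases h with h | ⟨ha, hb⟩
  exacts [.inl (liftRel_cons_symm h), .inr ⟨hb, ha⟩]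

theorem glueCons_trans (hab : glueCons g r? a b) (hbc : glueCons g r? b c) :
    glueCons g r? a c := by
  rcases hab with hab | ⟨ha, hb⟩ <;> rcases hbc with hbc | ⟨hb', hc⟩
  · left
    cases hab with
    | inl hab => cases hbc with | inl hbc => exact .inl (X.cons_trans hab hbc)
    | inr hab => cases hbc with | inr hbc => exact .inr (Y.cons_trans hab hbc)
  · exact .inr ⟨glueClass_of_liftRel hb' (liftRel_cons_symm hab), hc⟩
  · exact .inr ⟨ha, glueClass_of_liftRel hb hbc⟩
  · exact .inr ⟨ha, hc⟩

theorem glueParent_of_glueClass (hYpar : ∀ v, Y.parent (.inl (g.onV v)) = r?)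
    (h : glueClass g r? a) : ∃ r, r? = some r ∧ glueParent r? a = some (.inr r) := by
  rcases a with x | y
  · obtain ⟨hx, hr⟩ := h
    obtain ⟨r, rfl⟩ := Option.ne_none_iff_exists'.mp hr
    exact ⟨r, rfl, by rw [glueParent_inl_of_none hx]; rfl⟩
  · obtain ⟨v, hv⟩ := h
    obtain ⟨e, he, hy⟩ := Y.cons_parent hv
    exact ⟨e, (hYpar v).symm.trans he, by simp [glueParent, hy]⟩

theorem glueCons_parent (hYpar : ∀ v, Y.parent (.inl (g.onV v)) = r?)
    (h : glueCons g r? a b) : ∃ e, glueParent r? a = some e ∧ glueParent r? b = some e := by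
  rcases h with h | ⟨ha, hb⟩
  · cases h with
    | inl h =>
      obtain ⟨e, ha, hb⟩ := X.cons_parent h
      exact ⟨.inl e, glueParent_inl_of_some ha, glueParent_inl_of_some hb⟩
    | inr h =>
      obtain ⟨e, ha, hb⟩ := Y.cons_parent h
      exact ⟨.inr e, by simp [glueParent, ha], by simp [glueParent, hb]⟩
  · obtain ⟨r, hr, ha⟩ := glueParent_of_glueClass hYpar ha
    obtain ⟨r', hr', hb⟩ := glueParent_of_glueClass hYpar hb
    obtain rfl : r = r' := Option.some.inj (hr.symm.trans hr')
    exact ⟨_, ha, hb⟩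

theorem glueCons_refl {e : X.E ⊕ Y.E} (h : glueParent r? a = some e) : glueCons g r? a a := by
  rcases a with x | y
  · cases hx : X.parent x with
    | some p => exact .inl (.inl (X.cons_refl x p hx))
    | none =>
      have hr : r? ≠ none := by
        rintro rfl
        simp [glueParent, hx] at h
      exact .inr ⟨⟨hx, hr⟩, ⟨hx, hr⟩⟩
  · obtain ⟨p, hp, -⟩ := Option.map_eq_some_iff.mp h
    exact .inl (.inr (Y.cons_refl y p hp))

theorem glueCons_inl_of_parent_eq {a b : X.V ⊕ X.E} (hab : X.parent a = X.parent b)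
    (hcons : (∃ p, X.parent a = some p) → X.cons a b)
    (h : ∃ e, glueParent r? (.inl a) = some e) : glueCons g r? (.inl a) (.inl b) := by
  cases ha : X.parent a with
  | some p => exact .inl (.inl (hcons ⟨p, ha⟩))
  | none =>
    have hr : r? ≠ none := by
      rintro rfl
      simp [glueParent, ha] at h
    exact .inr ⟨⟨ha, hr⟩, ⟨hab ▸ ha, hr⟩⟩

theorem glueParent_origin_ofY (hg : Injective g.onV)
    (hXtop : ∀ v, X.parent (.inl (f.onV v)) = none) (hYpar : ∀ v, Y.parent (.inl (g.onV v)) = r?)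
    (y : Y.V ⊕ Y.E) : glueParent r? (origin g (ofY f g y)) = (Y.parent y).map .inr := by
  rcases ofY_cases (f := f) (g := g) y with ⟨v, rfl⟩ | h
  · rw [origin_ofY_onV hg, glueParent_inl_of_none (hXtop v), hYpar v]
  · rw [h]
    rfl

theorem glueClass_origin_ofY (hg : Injective g.onV)
    (hXtop : ∀ v, X.parent (.inl (f.onV v)) = none) (hYpar : ∀ v, Y.parent (.inl (g.onV v)) = r?)
    (y : Y.V ⊕ Y.E) : glueClass g r? (origin g (ofY f g y)) ↔ ∃ v, Y.cons (.inl (g.onV v)) y := by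
  rcases ofY_cases (f := f) (g := g) y with ⟨v, rfl⟩ | h
  · rw [origin_ofY_onV hg]
    simp only [glueClass, hXtop v, true_and]
    constructor
    · intro hr
      obtain ⟨r, rfl⟩ := Option.ne_none_iff_exists'.mp hr
      exact ⟨v, Y.cons_refl _ r (hYpar v)⟩
    · rintro ⟨u, hu⟩
      obtain ⟨e, -, he⟩ := Y.cons_parent hu
      simp [← hYpar v, he]
  · rw [h]
    rfl

theorem cons_of_liftRel_origin_ofY (hg : Injective g.onV)
    (hXtop : ∀ v, X.parent (.inl (f.onV v)) = none) {a b : Y.V ⊕ Y.E}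
    (h : Sum.LiftRel X.cons Y.cons (origin g (ofY f g a)) (origin g (ofY f g b))) :
    Y.cons a b := by
  rcases ofY_cases (f := f) (g := g) a with ⟨v, rfl⟩ | ha <;>
    rcases ofY_cases (f := f) (g := g) b with ⟨w, rfl⟩ | hb
  · rw [origin_ofY_onV hg, origin_ofY_onV hg, Sum.liftRel_inl_inl] at h
    obtain ⟨e, he, -⟩ := X.cons_parent h
    simp [hXtop v] at he
  · rw [origin_ofY_onV hg, hb] at h
    exact absurd h Sum.not_liftRel_inl_inr
  · rw [ha, origin_ofY_onV hg] at h
    exact absurd h Sum.not_liftRel_inr_inl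
  · rwa [ha, hb, Sum.liftRel_inr_inr] at h

theorem glueCons_origin_ofY (hg : Injective g.onV)
    (hXtop : ∀ v, X.parent (.inl (f.onV v)) = none) (hYpar : ∀ v, Y.parent (.inl (g.onV v)) = r?)
    (hconsY : ∀ v w y, Y.cons (.inl (g.onV v)) y ↔ Y.cons (.inl (g.onV w)) y)
    (a b : Y.V ⊕ Y.E) :
    glueCons g r? (origin g (ofY f g a)) (origin g (ofY f g b)) ↔ Y.cons a b := by
  simp only [glueCons, glueClass_origin_ofY hg hXtop hYpar]
  constructor
  · rintro (h | ⟨⟨v, hv⟩, ⟨w, hw⟩⟩)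
    · exact cons_of_liftRel_origin_ofY hg hXtop h
    · exact Y.cons_trans (Y.cons_symm hv) ((hconsY w v b).mp hw)
  · intro h
    by_cases hglued : (∃ v, a = .inl (g.onV v)) ∨ ∃ v, b = .inl (g.onV v)
    · right
      rcases hglued with ⟨v, rfl⟩ | ⟨v, rfl⟩
      · exact ⟨⟨v, Y.cons_trans h (Y.cons_symm h)⟩, ⟨v, h⟩⟩
      · exact ⟨⟨v, Y.cons_symm h⟩, ⟨v, Y.cons_trans (Y.cons_symm h) h⟩⟩
    · left
      rw [(ofY_cases a).resolve_left fun ha => hglued (.inl ha),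
        (ofY_cases b).resolve_left fun hb => hglued (.inr hb)]
      exact .inr h

structure GlueData (f : Z ⟶ X) (g : Z ⟶ Y) where
  parentY : Option Y.E
  injective_g : Injective g.onV
  parent_f : ∀ v, X.parent (.inl (f.onV v)) = none
  parent_g : ∀ v, Y.parent (.inl (g.onV v)) = parentY
  exists_child : ∀ r, parentY = some r → ∃ y, Y.parent y = some r
  cons_g : ∀ v w y, Y.cons (.inl (g.onV v)) y ↔ Y.cons (.inl (g.onV w)) y

theorem nonempty_glueData (hg : Injective g.onV) (hXtop : ∀ v, X.parent (.inl (f.onV v)) = none)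
    (hYpar : ∀ v w, Y.parent (.inl (g.onV v)) = Y.parent (.inl (g.onV w)))
    (hconsY : ∀ v w y, Y.cons (.inl (g.onV v)) y ↔ Y.cons (.inl (g.onV w)) y) :
    Nonempty (GlueData f g) := by
  rcases isEmpty_or_nonempty Z.V with hZ | hZ
  · exact ⟨⟨none, hg, hXtop, isEmptyElim, by simp, hconsY⟩⟩
  · obtain ⟨v₀⟩ := hZ
    exact ⟨⟨Y.parent (.inl (g.onV v₀)), hg, hXtop, (hYpar · v₀), fun _ h => ⟨_, h⟩, hconsY⟩⟩

variable (D : GlueData f g)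

theorem GlueData.glueParent_origin_ofY (y : Y.V ⊕ Y.E) :
    glueParent D.parentY (origin g (ofY f g y)) = (Y.parent y).map .inr :=
  EHyp.glueParent_origin_ofY D.injective_g D.parent_f D.parent_g y

theorem GlueData.glueCons_origin_ofY (a b : Y.V ⊕ Y.E) :
    glueCons g D.parentY (origin g (ofY f g a)) (origin g (ofY f g b)) ↔ Y.cons a b :=
  EHyp.glueCons_origin_ofY D.injective_g D.parent_f D.parent_g D.cons_g a b

noncomputable def glue : EHyp σ where
  V := X.V ⊕ FreeV g
  E := X.E ⊕ Y.E
  fintV := Fintype.ofFinite _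
  src := Sum.elim (fun e => (X.src e).map .inl) (fun e => (Y.src e).map (glueV f g))
  tgt := Sum.elim (fun e => (X.tgt e).map .inl) (fun e => (Y.tgt e).map (glueV f g))
  lbl := Sum.elim X.lbl Y.lbl
  parent t := glueParent D.parentY (origin g t)
  cons s t := glueCons g D.parentY (origin g s) (origin g t)
  lbl_ar := by
    rintro (e | e) l h
    · simpa using X.lbl_ar e l h
    · simpa using Y.lbl_ar e l h
  parent_hier := by
    rintro t (e | e) h
    · obtain ⟨x, -, hx⟩ := glueParent_eq_some_inl.mp h
      exact X.parent_hier x e hx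
    · obtain ⟨y, hy⟩ := exists_parent_eq_of_glueParent_eq_some_inr D.exists_child h
      exact Y.parent_hier y e hy
  acyclic_parent := Relation.not_transGen_self_of_map (s := Sum.Lex Y.anc X.anc)
    (fun t => (origin g t).swap) (by rintro _ t ⟨e, rfl, h⟩; exact lex_of_glueParent_eq_some h)
  parent_conn := by
    rintro (e | e) v hv <;> obtain ⟨u, hu, rfl⟩ := List.exists_of_mem_map_or hv
    · exact glueParent_inl_congr (X.parent_conn e u hu)
    · change glueParent _ (origin g (ofY f g (.inl u))) = glueParent _ (origin g (ofY f g (.inr e)))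
      rw [D.glueParent_origin_ofY, D.glueParent_origin_ofY, Y.parent_conn e u hu]
  maximal_lbl := by
    rintro (e | e) he
    · exact X.maximal_lbl e fun x hx => he (ofX g x) (by rw [origin_ofX, glueParent_inl_of_some hx])
    · refine Y.maximal_lbl e fun y hy => he (ofY f g y) ?_
      rw [D.glueParent_origin_ofY, hy]
      rfl
  cons_symm := glueCons_symm
  cons_trans := glueCons_trans
  cons_parent := glueCons_parent D.parent_g
  cons_refl _ _ := glueCons_refl
  cons_conn := by
    rintro (e | e) v hv hpar <;> obtain ⟨u, hu, rfl⟩ := List.exists_of_mem_map_or hv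
    · exact glueCons_inl_of_parent_eq (X.parent_conn e u hu) (X.cons_conn e u hu) hpar
    · refine (D.glueCons_origin_ofY _ _).mpr (Y.cons_conn e u hu ?_)
      obtain ⟨p, hp⟩ := hpar
      obtain ⟨q, hq, -⟩ :=
        Option.map_eq_some_iff.mp ((D.glueParent_origin_ofY (.inl u)).symm.trans hp)
      exact ⟨q, hq⟩
  cons_nontotal := by
    rintro (e | e) ⟨t, ht⟩
    · obtain ⟨x, -, hx⟩ := glueParent_eq_some_inl.mp ht
      obtain ⟨a, b, ha, hb, hab⟩ := X.cons_nontotal e ⟨x, hx⟩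
      refine ⟨ofX g a, ofX g b, ?_, ?_, ?_⟩ <;> simp only [origin_ofX]
      · exact glueParent_inl_of_some ha
      · exact glueParent_inl_of_some hb
      · rintro (h | ⟨⟨ha', -⟩, -⟩)
        · exact hab (Sum.liftRel_inl_inl.mp h)
        · simp [ha] at ha'
    · obtain ⟨y, hy⟩ := exists_parent_eq_of_glueParent_eq_some_inr D.exists_child ht
      obtain ⟨a, b, ha, hb, hab⟩ := Y.cons_nontotal e ⟨y, hy⟩
      refine ⟨ofY f g a, ofY f g b, ?_, ?_, ?_⟩
      · rw [D.glueParent_origin_ofY, ha]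
        rfl
      · rw [D.glueParent_origin_ofY, hb]
        rfl
      · rwa [D.glueCons_origin_ofY]

noncomputable def glueInl : X ⟶ glue D where
  onV := .inl
  onE := .inl
  map_src _ := rfl
  map_tgt _ := rfl
  map_lbl _ := rfl
  map_parent x _ h := by
    change glueParent D.parentY (origin g (ofX g x)) = _
    rw [origin_ofX]
    exact glueParent_inl_of_some h
  map_cons x y h := by
    change glueCons g D.parentY (origin g (ofX g x)) (origin g (ofX g y))
    rw [origin_ofX, origin_ofX]
    exact .inl (.inl h)

noncomputable def glueInr : Y ⟶ glue D where
  onV := glueV f g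
  onE := .inr
  map_src _ := rfl
  map_tgt _ := rfl
  map_lbl _ := rfl
  map_parent y _ h := by
    change glueParent D.parentY (origin g (ofY f g y)) = _
    rw [D.glueParent_origin_ofY, h]
    rfl
  map_cons _ _ h := (D.glueCons_origin_ofY _ _).mpr h

theorem glue_condition (hZ : IsEmpty Z.E) : f ≫ glueInl D = g ≫ glueInr D :=
  EHypHom.ext' (funext fun v => (glueV_onV D.injective_g v).symm) (funext hZ.elim)

theorem mono_glueInl : Mono (glueInl D) :=
  mono_of_injective _ Sum.inl_injective Sum.inl_injective

theorem mono_glueInr (hf : Injective f.onV) : Mono (glueInr D) :=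
  mono_of_injective _ (glueV_injective hf D.injective_g) Sum.inr_injective

theorem exists_mono_cocone (hZ : IsEmpty Z.E) (hf : Injective f.onV) (hg : Injective g.onV)
    (hXtop : ∀ v, X.parent (.inl (f.onV v)) = none)
    (hYpar : ∀ v w, Y.parent (.inl (g.onV v)) = Y.parent (.inl (g.onV w)))
    (hconsY : ∀ v w y, Y.cons (.inl (g.onV v)) y ↔ Y.cons (.inl (g.onV w)) y) :
    ∃ (T : EHyp σ) (jX : X ⟶ T) (jY : Y ⟶ T), f ≫ jX = g ≫ jY ∧ Mono jX ∧ Mono jY :=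
  let ⟨D⟩ := nonempty_glueData hg hXtop hYpar hconsY
  ⟨glue D, glueInl D, glueInr D, glue_condition D hZ, mono_glueInl D, mono_glueInr D hf⟩

end Glue

end EHyp

theorem EHyp.pushout_inj_mono_general {σ : MSig} {Z X Y : EHyp σ} (f : Z ⟶ X) (g : Z ⟶ Y)
    (hdiscrete : IsEmpty Z.E)
    (hparentsX : ∀ v w : Z.V, ∀ x,
      X.anc x (Sum.inl (f.onV v)) ↔ X.anc x (Sum.inl (f.onV w)))
    (hparentsY : ∀ v w : Z.V, ∀ y,
      Y.anc y (Sum.inl (g.onV v)) ↔ Y.anc y (Sum.inl (g.onV w)))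
    (hexcl₁ : ∀ v : Z.V, (∃ x, X.anc x (Sum.inl (f.onV v))) →
      ¬ ∃ y, Y.anc y (Sum.inl (g.onV v)))
    (hconsX : ∀ v w : Z.V, ∀ x,
      X.cons (Sum.inl (f.onV v)) x ↔ X.cons (Sum.inl (f.onV w)) x)
    (hconsY : ∀ v w : Z.V, ∀ y,
      Y.cons (Sum.inl (g.onV v)) y ↔ Y.cons (Sum.inl (g.onV w)) y)
    (hf : Mono f) (hg : Mono g) :
    ∀ (P : EHyp σ) (inX : X ⟶ P) (inY : Y ⟶ P),
      IsPushout f g inX inY → Mono inX ∧ Mono inY := by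
  intro P inX inY hpo
  have hfV := EHyp.injective_onV_of_mono f
  have hgV := EHyp.injective_onV_of_mono g
  have hXpar v w := EHyp.parent_eq_of_anc_iff (hparentsX v w)
  have hYpar v w := EHyp.parent_eq_of_anc_iff (hparentsY v w)
  by_cases hXtop : ∀ v, X.parent (.inl (f.onV v)) = none
  · obtain ⟨T, jX, jY, w, _, _⟩ := EHyp.exists_mono_cocone hdiscrete hfV hgV hXtop hYpar hconsY
    exact ⟨hpo.mono_inl_of_cocone w, hpo.mono_inr_of_cocone w⟩
  · -- the glued vertices have a parent in `X`, hence none in `Y`: swap the roles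
    obtain ⟨v₀, hv₀⟩ := not_forall.mp hXtop
    obtain ⟨q, hq⟩ := Option.ne_none_iff_exists'.mp hv₀
    have hYtop : ∀ v, Y.parent (.inl (g.onV v)) = none := fun v => by
      rw [hYpar v v₀, Option.eq_none_iff_forall_ne_some]
      intro r hr
      exact hexcl₁ v₀ ⟨_, EHyp.anc_of_parent_eq_some hq⟩ ⟨_, EHyp.anc_of_parent_eq_some hr⟩
    obtain ⟨T, jY, jX, w, _, _⟩ := EHyp.exists_mono_cocone hdiscrete hgV hfV hYtop hXpar hconsX
    exact ⟨hpo.mono_inl_of_cocone w.symm, hpo.mono_inr_of_cocone w.symm⟩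

/-- **Pushout injections of monos are monos.**  Under the hypotheses of the
pushout-existence theorem for `EHyp(σ)` (`Z` discrete; equal parent-sets and equal
consistency classes of the images of any two vertices of `Z` under each leg; no vertex of
`Z` having a parent under both legs), if both legs `f : Z → X` and `g : Z → Y` are
monomorphisms, then the two injections of any pushout `X +_{f,g} Y` are monomorphisms. -/
theorem EHyp.pushout_inj_mono {σ : MSig} {Z X Y : EHyp σ} (f : Z ⟶ X) (g : Z ⟶ Y)
    (hdiscrete : IsEmpty Z.E)
    (hparentsX : ∀ v w : Z.V, ∀ x,
      X.anc x (Sum.inl (f.onV v)) ↔ X.anc x (Sum.inl (f.onV w)))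
    (hparentsY : ∀ v w : Z.V, ∀ y,
      Y.anc y (Sum.inl (g.onV v)) ↔ Y.anc y (Sum.inl (g.onV w)))
    (hexcl₁ : ∀ v : Z.V, (∃ x, X.anc x (Sum.inl (f.onV v))) →
      ¬ ∃ y, Y.anc y (Sum.inl (g.onV v)))
    (hexcl₂ : ∀ v : Z.V, (∃ y, Y.anc y (Sum.inl (g.onV v))) →
      ¬ ∃ x, X.anc x (Sum.inl (f.onV v)))
    (hconsX : ∀ v w : Z.V, ∀ x,
      X.cons (Sum.inl (f.onV v)) x ↔ X.cons (Sum.inl (f.onV w)) x)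
    (hconsY : ∀ v w : Z.V, ∀ y,
      Y.cons (Sum.inl (g.onV v)) y ↔ Y.cons (Sum.inl (g.onV w)) y)
    (hf : Mono f) (hg : Mono g) :
    ∀ (P : EHyp σ) (inX : X ⟶ P) (inY : Y ⟶ P),
      IsPushout f g inX inY → Mono inX ∧ Mono inY :=
  EHyp.pushout_inj_mono_general f g hdiscrete hparentsX hparentsY hexcl₁ hconsX hconsY hf hg
end

section
/- Let Σ be a monoidal signature. Two cospans n →f G ←g m and n →f' G' ←g' m in Hyp(Σ) are isomorphic as cospans if and only if the corresponding extended cospans n → n → G ← m ← m and n → n → G' ← m ← m in EHyp(Σ) (with identity-like external legs, so that the composites of the legs equal f, g and f', g' respectively, and with G, G' regarded as e-hypergraphs with empty child and consistency relations) are isomorphic as extended cospans. Consequently there is a faithful identity-on-objects functor E : HypI(Σ) → EHypI(Σ). -/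
open CategoryTheory

variable (σ : MSig)

/-- A plain `σ`-labelled hypergraph (no hierarchical structure). -/
structure Hyp : Type 1 where
  V : Type
  E : Type
  [fintV : Fintype V]
  [fintE : Fintype E]
  src : E → List V
  tgt : E → List V
  lbl : E → σ.Gen
  lbl_ar : ∀ e : E, (src e).length = σ.ar (lbl e) ∧ (tgt e).length = σ.coar (lbl e)

attribute [instance] Hyp.fintV Hyp.fintE

/-- Homomorphisms of plain hypergraphs. -/
structure HypHom (G H : Hyp σ) : Type where
  onV : G.V → H.V
  onE : G.E → H.E
  map_src : ∀ e, H.src (onE e) = (G.src e).map onV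
  map_tgt : ∀ e, H.tgt (onE e) = (G.tgt e).map onV
  map_lbl : ∀ e, H.lbl (onE e) = G.lbl e

/-- Isomorphisms of plain hypergraphs. -/
structure HypIso (G H : Hyp σ) : Type where
  hom : HypHom σ G H
  inv : HypHom σ H G
  left_V : ∀ v, inv.onV (hom.onV v) = v
  right_V : ∀ v, hom.onV (inv.onV v) = v
  left_E : ∀ e, inv.onE (hom.onE e) = e
  right_E : ∀ e, hom.onE (inv.onE e) = e

/-- Isomorphisms of e-hypergraphs. -/
structure EHypIso (G H : EHyp σ) : Type where
  hom : EHypHom σ G H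
  inv : EHypHom σ H G
  left_V : ∀ v, inv.onV (hom.onV v) = v
  right_V : ∀ v, hom.onV (inv.onV v) = v
  left_E : ∀ e, inv.onE (hom.onE e) = e
  right_E : ∀ e, hom.onE (inv.onE e) = e

/-- A plain hypergraph regarded as an e-hypergraph with empty child and consistency
relations. -/
def Hyp.toE (G : Hyp σ) : EHyp σ where
  V := G.V
  E := G.E
  src := G.src
  tgt := G.tgt
  lbl e := some (G.lbl e)
  parent _ := none
  cons _ _ := False
  lbl_ar := by intro e g h; cases h; exact G.lbl_ar e
  parent_hier := by intro x e h; cases h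
  acyclic_parent := by
    have key : ∀ x y : G.V ⊕ G.E,
        ¬ Relation.TransGen (fun a b : G.V ⊕ G.E => ∃ e, a = Sum.inr e ∧ none = some e) x y := by
      intro x y h
      induction h with
      | single h => obtain ⟨e, _, h⟩ := h; cases h
      | tail _ h _ => obtain ⟨e, _, h⟩ := h; cases h
    intro x h
    exact key x x h
  parent_conn := by intro e v _; rfl
  maximal_lbl := by intro e _ h; cases h
  cons_symm := by intro x y h; cases h
  cons_trans := by intro x y z h; cases h
  cons_parent := by intro x y h; cases h
  cons_refl := by intro x e h; cases h
  cons_conn := by intro e v _ h; obtain ⟨p, hp⟩ := h; cases hp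
  cons_nontotal := by intro e h; obtain ⟨x, hx⟩ := h; cases hx

/-- A cospan of plain hypergraphs over discrete ordered interfaces `n` and `m`
(a morphism of `HypI(σ)` before quotienting by isomorphism). -/
structure HCospan (n m : ℕ) : Type 1 where
  G : Hyp σ
  i : Fin n → G.V
  o : Fin m → G.V

/-- Isomorphism of cospans of plain hypergraphs. -/
def HCospanIso {σ : MSig} {n m : ℕ} (c d : HCospan σ n m) : Prop :=
  ∃ φ : HypIso σ c.G d.G,
    (∀ k, φ.hom.onV (c.i k) = d.i k) ∧ (∀ k, φ.hom.onV (c.o k) = d.o k)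

/-- An extended cospan of e-hypergraphs
`n → n' → G ← m' ← m` (a morphism of `EHypI(σ)` before quotienting by isomorphism):
external interfaces `n, m`, discrete ordered internal interfaces of sizes `ni, mi`, with the
external legs mono, the external interface consisting of top-level vertices and the strictly
internal interfaces consisting of non-top-level vertices. -/
structure ECospan (n m : ℕ) : Type 1 where
  G : EHyp σ
  ni : ℕ
  mi : ℕ
  fext : Fin n → Fin ni
  fint : Fin ni → G.V
  gext : Fin m → Fin mi
  gint : Fin mi → G.V
  fext_inj : Function.Injective fext
  gext_inj : Function.Injective gext
  ext_in_top : ∀ k, G.parent (Sum.inl (fint (fext k))) = none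
  ext_out_top : ∀ k, G.parent (Sum.inl (gint (gext k))) = none
  strict_in_not_top : ∀ j, (∀ k, fext k ≠ j) → G.parent (Sum.inl (fint j)) ≠ none
  strict_out_not_top : ∀ j, (∀ k, gext k ≠ j) → G.parent (Sum.inl (gint j)) ≠ none

namespace ECospan

variable {σ} {n m : ℕ}

/-- The reflexive closure of the relation induced on the internal input interface by the
consistency relation of the carrier: the partition of the interface into blocks. -/
def SRel (c : ECospan σ n m) (j j' : Fin c.ni) : Prop :=
  j = j' ∨ c.G.cons (Sum.inl (c.fint j)) (Sum.inl (c.fint j'))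

/-- The block partition of the internal output interface. -/
def TRel (c : ECospan σ n m) (j j' : Fin c.mi) : Prop :=
  j = j' ∨ c.G.cons (Sum.inl (c.gint j)) (Sum.inl (c.gint j'))

end ECospan

/-- Isomorphism of extended cospans: isomorphisms of the internal interfaces and of the
carrier commuting with all the legs, such that the interface isomorphisms preserve the order
within each block of the partition induced by the consistency relation. -/
structure ECospanIso {σ : MSig} {n m : ℕ} (c d : ECospan σ n m) : Type where
  α : Fin c.ni ≃ Fin d.ni
  γ : Fin c.mi ≃ Fin d.mi
  iso : EHypIso σ c.G d.G
  comm_fext : ∀ k, α (c.fext k) = d.fext k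
  comm_fint : ∀ j, iso.hom.onV (c.fint j) = d.fint (α j)
  comm_gext : ∀ k, γ (c.gext k) = d.gext k
  comm_gint : ∀ j, iso.hom.onV (c.gint j) = d.gint (γ j)
  α_order : ∀ j j', c.SRel j j' → j ≤ j' → α j ≤ α j'
  γ_order : ∀ j j', c.TRel j j' → j ≤ j' → γ j ≤ γ j'

/-- A cospan of plain hypergraphs regarded as an extended cospan of e-hypergraphs with
identity-like external legs. -/
def HCospan.toE {σ : MSig} {n m : ℕ} (c : HCospan σ n m) : ECospan σ n m where
  G := c.G.toE
  ni := n
  mi := m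
  fext := id
  fint := c.i
  gext := id
  gint := c.o
  fext_inj := fun _ _ h => h
  gext_inj := fun _ _ h => h
  ext_in_top := fun _ => rfl
  ext_out_top := fun _ => rfl
  strict_in_not_top := fun j h => absurd rfl (h j)
  strict_out_not_top := fun j h => absurd rfl (h j)

/-! `Hyp.toE` adds no parent or consistency data, so homomorphisms and isomorphisms of plain
hypergraphs are exactly those of their e-hypergraphs. The external legs of `HCospan.toE` are
identities, which forces the interface bijections of an isomorphism of extended cospans to be
identities as well; conversely identity interface bijections satisfy the order conditions
trivially. -/

def HypHom.toE {σ : MSig} {G H : Hyp σ} (f : HypHom σ G H) : EHypHom σ G.toE H.toE where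
  onV := f.onV
  onE := f.onE
  map_src := f.map_src
  map_tgt := f.map_tgt
  map_lbl e := congrArg some (f.map_lbl e)
  map_parent _ _ h := nomatch h
  map_cons _ _ h := h.elim

def HypHom.ofE {σ : MSig} {G H : Hyp σ} (f : EHypHom σ G.toE H.toE) : HypHom σ G H where
  onV := f.onV
  onE := f.onE
  map_src := f.map_src
  map_tgt := f.map_tgt
  map_lbl e := Option.some_injective _ (f.map_lbl e)

def HypIso.toE {σ : MSig} {G H : Hyp σ} (φ : HypIso σ G H) : EHypIso σ G.toE H.toE :=
  ⟨φ.hom.toE, φ.inv.toE, φ.left_V, φ.right_V, φ.left_E, φ.right_E⟩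

def EHypIso.ofE {σ : MSig} {G H : Hyp σ} (φ : EHypIso σ G.toE H.toE) : HypIso σ G H :=
  ⟨HypHom.ofE φ.hom, HypHom.ofE φ.inv, φ.left_V, φ.right_V, φ.left_E, φ.right_E⟩

namespace ECospanIso

variable {σ : MSig} {n m : ℕ} {c d : HCospan σ n m}

def ofHypIso (φ : HypIso σ c.G d.G) (hi : ∀ k, φ.hom.onV (c.i k) = d.i k)
    (ho : ∀ k, φ.hom.onV (c.o k) = d.o k) : ECospanIso c.toE d.toE where
  α := Equiv.refl _
  γ := Equiv.refl _
  iso := φ.toE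
  comm_fext _ := rfl
  comm_fint := hi
  comm_gext _ := rfl
  comm_gint := ho
  α_order _ _ _ h := h
  γ_order _ _ _ h := h

theorem iso_hom_toE_i (e : ECospanIso c.toE d.toE) (k : Fin n) :
    e.iso.hom.onV (c.i k) = d.i k :=
  (e.comm_fint k).trans (congrArg d.i (e.comm_fext k))

theorem iso_hom_toE_o (e : ECospanIso c.toE d.toE) (k : Fin m) :
    e.iso.hom.onV (c.o k) = d.o k :=
  (e.comm_gint k).trans (congrArg d.o (e.comm_gext k))

end ECospanIso

/-- **Embedding of `HypI(σ)` into `EHypI(σ)`.**  Two cospans `n → G ← m` and `n → G' ← m` of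
plain hypergraphs are isomorphic as cospans if and only if the corresponding extended cospans
`n → n → G ← m ← m` (with identity-like external legs, and with the carriers regarded as
e-hypergraphs with empty child and consistency relations) are isomorphic as extended cospans.
Consequently, the induced identity-on-objects functor `E : HypI(σ) → EHypI(σ)` (acting on
isomorphism classes) is well defined and faithful. -/
theorem HCospan.iso_iff_toE_iso {σ : MSig} {n m : ℕ} (c d : HCospan σ n m) :
    HCospanIso c d ↔ Nonempty (ECospanIso c.toE d.toE) := by
  constructor
  · rintro ⟨φ, hi, ho⟩
    exact ⟨.ofHypIso φ hi ho⟩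
  · rintro ⟨e⟩
    exact ⟨e.iso.ofE, e.iso_hom_toE_i, e.iso_hom_toE_o⟩
end
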